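/- arXiv:1902.01688 — 2 statements merged into one kernel-verified Lean document; each statement's English description precedes it below -/
import Mathlib

section
/- Let k > 0 and let T be a linear operator that maps each function holomorphic on some neighborhood of the segment I = [-1,1] ⊂ ℂ to a function holomorphic on some neighborhood of I, satisfying the A(k) property with k-threshold τ. Let u be holomorphic and bounded on [-1,1]_r := {z ∈ ℂ : dist(z, I) < r} for some r ∈ (0,τ]. Then the series Σ_{n≥0} (T^{<n>} u)|_{[-1,1]} of iterates of T applied to u converges uniformly on [-1,1], its sum v belongs to the Gevrey class G_k([-1,1]), and v satisfies the linear functional equation v − T̃(v) = u on [-1,1], where T̃ is the endomorphism of G_k([-1,1]) induced by T (equivalently, v(x) = u(x) + Σ_{n≥1} (T^{<n>} u)(x) for all x ∈ [-1,1], the series Σ_{n≥1} (T^{<n>} u)|_{[-1,1]} being the value of T̃ at v). -/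
open Metric Set Filter

noncomputable section

/-- The segment `[-1,1]` viewed inside `ℂ`. -/
def seg : Set ℂ := (fun x : ℝ => (x : ℂ)) '' Set.Icc (-1) 1

/-- The neighborhood `[-1,1]_r` of the segment. -/
def nbd (r : ℝ) : Set ℂ := {z : ℂ | Metric.infDist z seg < r}

/-- The set `[-1,1]_{k,A,n}`. -/
def tube (k A : ℝ) (n : ℕ) : Set ℂ :=
  {z : ℂ | Metric.infDist z seg < A * (n : ℝ) ^ (-(1 : ℝ) / k)}

/-- Sup norm of `f` on `S`. -/
def supOn (f : ℂ → ℂ) (S : Set ℂ) : ℝ := sSup ((fun z => ‖f z‖) '' S)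

/-- The Gevrey class `G_k([-1,1])`. -/
def GevreyClass (k : ℝ) (f : ℝ → ℂ) : Prop :=
  ContDiffOn ℝ (⊤ : ℕ∞) f (Set.Icc (-1) 1) ∧
  ∃ C > 0, ∃ A > 0, ∀ n : ℕ, ∀ x ∈ Set.Icc (-1 : ℝ) 1,
    ‖iteratedDerivWithin n f (Set.Icc (-1 : ℝ) 1) x‖ ≤
      C * A ^ n * (n : ℝ) ^ ((n : ℝ) * (1 + 1 / k))

/-- `(f_n)_{n ≥ 1}` is a `k`-sequence. -/
def IsKSeq (k : ℝ) (f : ℕ → ℂ → ℂ) : Prop :=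
  ∃ B > 0, ∃ C > 0, ∃ θ ∈ Set.Ioo (0 : ℝ) 1, ∀ n : ℕ, 1 ≤ n →
    DifferentiableOn ℂ (f n) (tube k B n) ∧ ∀ z ∈ tube k B n, ‖f n z‖ ≤ C * θ ^ n

/-- The `E(k)` property with threshold `τ` for a sequence of functions on `[-1,1]_σ`. -/
def EPropWith (k σ : ℝ) (φ : ℕ → ℂ → ℂ) (τ : ℝ) : Prop :=
  0 < τ ∧ τ ≤ σ ∧ ∀ A : ℝ, 0 < A → A ≤ τ → ∃ M : ℕ, ∀ n : ℕ, M ≤ n → ∀ p : ℕ,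
    ∀ z ∈ tube k A (n + 1), φ p z ∈ tube k A n

/-- The `E(k)` property. -/
def EProp (k σ : ℝ) (φ : ℕ → ℂ → ℂ) : Prop := ∃ τ : ℝ, EPropWith k σ φ τ

/-- `T` is a linear operator on functions. -/
def IsLinOp (T : (ℂ → ℂ) → ℂ → ℂ) : Prop :=
  (∀ f g : ℂ → ℂ, T (f + g) = T f + T g) ∧ ∀ (c : ℂ) (f : ℂ → ℂ), T (c • f) = c • T f

/-- The quantitative part of the `A(k)` property, for a given `A` and integer `N = N(A)`. -/
def APropAt (k : ℝ) (T : (ℂ → ℂ) → ℂ → ℂ) (ρ A : ℝ) (N : ℕ) : Prop :=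
  ∀ n : ℕ, N ≤ n → ∀ f : ℂ → ℂ, DifferentiableOn ℂ f (tube k A n) →
    BddAbove ((fun z => ‖f z‖) '' tube k A n) →
    DifferentiableOn ℂ (T f) (tube k A (n + 1)) ∧
      ∀ z ∈ tube k A (n + 1), ‖T f z‖ ≤ ρ * supOn f (tube k A n)

/-- The `A(k)` property with `k`-threshold `τ` and contraction constant `ρ`. -/
def AProp (k : ℝ) (T : (ℂ → ℂ) → ℂ → ℂ) (τ ρ : ℝ) : Prop :=
  0 < τ ∧ ρ ∈ Set.Ioo (0 : ℝ) 1 ∧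
  (∀ A : ℝ, 0 < A → A ≤ τ → ∃ N : ℕ, APropAt k T ρ A N) ∧
  (∀ f : ℂ → ℂ, (∃ r > 0, DifferentiableOn ℂ f (nbd r)) →
      ∀ z ∈ seg, ‖T f z‖ ≤ ρ * supOn f seg)

/-!
By the `A(k)` property, `T^[j] u` is holomorphic on the tube `[-1,1]_{k,r,m+j}`, of width
`r (m + j)^(-1/k)`, and bounded there by `ρ^j sup |u|`; this already gives uniform convergence
on `[-1,1]`. Cauchy's estimate on discs of half that width bounds the `n`-th derivative of
`T^[j] u` on `[-1,1]` by `n! (2/r)^n ρ^j (m + j)^(n/k)`, and `t^s ≤ (s/a)^s e^(a t)` gives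
`∑_j ρ^j (m + j)^(n/k) ≤ c B^n n^(n/k)`. So every series of derivatives converges uniformly on
`[-1,1]`, the series may be differentiated termwise there, and since `n! ≤ n^n` its sum is
Gevrey of order `k`. The functional equation is the series shifted by one term.
-/

open scoped ContDiff Nat Topology

section UniformLimit

variable {ι 𝕜 E : Type*} [RCLike 𝕜] [NormedAddCommGroup E] [NormedSpace 𝕜 E]

theorem hasDerivWithinAt_of_tendstoUniformlyOn_of_convex {l : Filter ι} [l.NeBot]
    {s : Set 𝕜} (hs : Convex ℝ s) {f f' : ι → 𝕜 → E} {F G : 𝕜 → E}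
    (hf : ∀ i, ∀ x ∈ s, HasDerivWithinAt (f i) (f' i x) s x)
    (hfF : ∀ x ∈ s, Tendsto (fun i => f i x) l (𝓝 (F x)))
    (hf'G : TendstoUniformlyOn f' G l s) {x : 𝕜} (hx : x ∈ s) :
    HasDerivWithinAt F (G x) s x := by
  rw [hasDerivWithinAt_iff_isLittleO, Asymptotics.isLittleO_iff]
  intro ε hε
  have hclose := Metric.tendstoUniformlyOn_iff.1 hf'G (ε / 4) (by positivity)
  obtain ⟨i, hi⟩ := hclose.exists
  -- `F - f i` is the limit of `f j - f i`, whose derivatives are `ε / 2`-small on `s`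
  have hlip : ∀ y ∈ s, ‖(F y - f i y) - (F x - f i x)‖ ≤ ε / 2 * ‖y - x‖ := by
    intro y hy
    refine le_of_tendsto (((hfF y hy).sub_const _).sub ((hfF x hx).sub_const _)).norm ?_
    filter_upwards [hclose] with j hj
    refine hs.norm_image_sub_le_of_norm_hasDerivWithin_le
      (fun z hz => (hf j z hz).sub (hf i z hz)) (fun z hz => ?_) hx hy
    calc ‖f' j z - f' i z‖ ≤ ‖f' j z - G z‖ + ‖G z - f' i z‖ :=
          norm_sub_le_norm_sub_add_norm_sub _ _ _
      _ ≤ ε / 4 + ε / 4 := by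
        rw [← dist_eq_norm, ← dist_eq_norm, dist_comm]
        exact add_le_add (hj z hz).le (hi z hz).le
      _ = ε / 2 := by ring
  have hdiff := Asymptotics.isLittleO_iff.1
    (hasDerivWithinAt_iff_isLittleO.1 (hf i x hx)) (c := ε / 4) (by positivity)
  filter_upwards [hdiff, self_mem_nhdsWithin] with y hy hys
  have hG : ‖(y - x) • (f' i x - G x)‖ ≤ ε / 4 * ‖y - x‖ := by
    rw [norm_smul, mul_comm, ← dist_eq_norm, dist_comm]
    exact mul_le_mul_of_nonneg_right (hi x hx).le (norm_nonneg _)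
  calc ‖F y - F x - (y - x) • G x‖
      = ‖((F y - f i y) - (F x - f i x)) + (f i y - f i x - (y - x) • f' i x)
          + (y - x) • (f' i x - G x)‖ := by
        congr 1; rw [smul_sub]; abel
    _ ≤ ε / 2 * ‖y - x‖ + ε / 4 * ‖y - x‖ + ε / 4 * ‖y - x‖ :=
        norm_add₃_le.trans (add_le_add_three (hlip y hys) hy hG)
    _ = ε * ‖y - x‖ := by ring

end UniformLimit

section Series

variable {𝕜 E : Type*} [RCLike 𝕜] [NormedAddCommGroup E] [NormedSpace 𝕜 E] {s : Set 𝕜}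

theorem iteratedDerivWithin_eqOn_of_hasDerivWithinAt_succ (hs : UniqueDiffOn 𝕜 s)
    {F : ℕ → 𝕜 → E} (hF : ∀ n, ∀ x ∈ s, HasDerivWithinAt (F n) (F (n + 1) x) s x) (n : ℕ) :
    EqOn (iteratedDerivWithin n (F 0) s) (F n) s := by
  induction n with
  | zero => intro x _; simp
  | succ n ih =>
    intro x hx
    rw [iteratedDerivWithin_succ, derivWithin_congr ih (ih hx)]
    exact (hF n x hx).derivWithin (hs x hx)

theorem contDiffOn_of_hasDerivWithinAt_succ (hs : UniqueDiffOn 𝕜 s)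
    {F : ℕ → 𝕜 → E} (hF : ∀ n, ∀ x ∈ s, HasDerivWithinAt (F n) (F (n + 1) x) s x) :
    ContDiffOn 𝕜 ∞ (F 0) s := by
  have hdiff (n : ℕ) : DifferentiableOn 𝕜 (iteratedDerivWithin n (F 0) s) s :=
    DifferentiableOn.congr (fun x hx => (hF n x hx).differentiableWithinAt)
      (iteratedDerivWithin_eqOn_of_hasDerivWithinAt_succ hs hF n)
  exact (contDiffOn_iff_continuousOn_differentiableOn_deriv hs).2
    ⟨fun n _ => (hdiff n).continuousOn, fun n _ => hdiff n⟩

theorem hasDerivWithinAt_tsum_iteratedDerivWithin [CompleteSpace E]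
    (hs : Convex ℝ s) (hs' : UniqueDiffOn 𝕜 s) {g : ℕ → 𝕜 → E} {w : ℕ → ℕ → ℝ}
    (hg : ∀ j, ContDiffOn 𝕜 ∞ (g j) s) (hw : ∀ n, Summable (w n))
    (hgw : ∀ n j, ∀ x ∈ s, ‖iteratedDerivWithin n (g j) s x‖ ≤ w n j) (n : ℕ) {x : 𝕜}
    (hx : x ∈ s) :
    HasDerivWithinAt (fun y => ∑' j, iteratedDerivWithin n (g j) s y)
      (∑' j, iteratedDerivWithin (n + 1) (g j) s x) s x := by
  refine hasDerivWithinAt_of_tendstoUniformlyOn_of_convex hs (l := atTop)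
    (f := fun N y => ∑ j ∈ Finset.range N, iteratedDerivWithin n (g j) s y)
    (fun N y hy => HasDerivWithinAt.fun_sum fun j _ => ?_)
    (fun y hy => (Summable.of_norm_bounded (hw n) fun j => hgw n j y hy).hasSum.tendsto_sum_nat)
    (tendstoUniformlyOn_tsum_nat (hw (n + 1)) fun j y hy => hgw (n + 1) j y hy) hx
  rw [iteratedDerivWithin_succ]
  exact ((hg j).differentiableOn_iteratedDerivWithin
    (by exact_mod_cast ENat.natCast_lt_top n) hs' y hy).hasDerivWithinAt

end Series

theorem rpow_le_mul_exp {a s t : ℝ} (ha : 0 < a) (hs : 0 ≤ s) (ht : 0 ≤ t) :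
    t ^ s ≤ (s / a) ^ s * Real.exp (a * t) := by
  rcases hs.eq_or_lt with rfl | hs
  · simpa using Real.one_le_exp (mul_nonneg ha.le ht)
  have hlin : t ≤ s / a * Real.exp (a * t / s) := by
    have := Real.add_one_le_exp (a * t / s)
    calc t = s / a * (a * t / s) := by field_simp
      _ ≤ s / a * Real.exp (a * t / s) := by gcongr; linarith
  calc t ^ s ≤ (s / a * Real.exp (a * t / s)) ^ s := by gcongr
    _ = (s / a) ^ s * Real.exp (a * t) := by
      rw [Real.mul_rpow (by positivity) (Real.exp_pos _).le, ← Real.exp_mul]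
      field_simp

theorem tsum_geometric_mul_rpow_le {ρ : ℝ} (hρ0 : 0 < ρ) (hρ1 : ρ < 1) (m : ℕ) :
    ∃ c > 0, ∃ a > 0, ∀ s ≥ 0,
      Summable (fun j : ℕ => ρ ^ j * ((m + j : ℕ) : ℝ) ^ s) ∧
      ∑' j : ℕ, ρ ^ j * ((m + j : ℕ) : ℝ) ^ s ≤ c * (s / a) ^ s := by
  -- half of the decay of `ρ ^ j` absorbs the polynomial growth, the other half is summed
  set σ := Real.sqrt ρ
  have hσ0 : 0 < σ := Real.sqrt_pos.2 hρ0
  have hσ1 : σ < 1 := (Real.sqrt_lt' one_pos).2 (by simpa using hρ1)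
  have hρσ : ρ = σ ^ 2 := (Real.sq_sqrt hρ0.le).symm
  have ha : 0 < Real.log σ⁻¹ := Real.log_pos (one_lt_inv_iff₀.2 ⟨hσ0, hσ1⟩)
  refine ⟨σ⁻¹ ^ m * (1 - σ)⁻¹, by have := sub_pos.2 hσ1; positivity, _, ha, fun s hs => ?_⟩
  have hterm (j : ℕ) :
      ρ ^ j * ((m + j : ℕ) : ℝ) ^ s ≤ σ ^ j * (σ⁻¹ ^ m * (s / Real.log σ⁻¹) ^ s) := by
    have hexp : Real.exp (Real.log σ⁻¹ * (m + j : ℕ)) = σ⁻¹ ^ (m + j) := by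
      rw [mul_comm, Real.exp_nat_mul, Real.exp_log (by positivity)]
    calc ρ ^ j * ((m + j : ℕ) : ℝ) ^ s
        ≤ ρ ^ j * ((s / Real.log σ⁻¹) ^ s * σ⁻¹ ^ (m + j)) := by
          rw [← hexp]; gcongr; exact rpow_le_mul_exp ha hs (Nat.cast_nonneg _)
      _ = σ ^ j * (σ⁻¹ ^ m * (s / Real.log σ⁻¹) ^ s) := by
          have hσσ : σ ^ j * σ⁻¹ ^ j = 1 := by rw [← mul_pow, mul_inv_cancel₀ hσ0.ne', one_pow]
          rw [hρσ, pow_add]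
          linear_combination (σ ^ j * σ⁻¹ ^ m * (s / Real.log σ⁻¹) ^ s) * hσσ
  have hgeom := (summable_geometric_of_lt_one hσ0.le hσ1).mul_right
    (σ⁻¹ ^ m * (s / Real.log σ⁻¹) ^ s)
  have hsum := Summable.of_nonneg_of_le (fun j => by positivity) hterm hgeom
  refine ⟨hsum, (Summable.tsum_le_tsum hterm hsum hgeom).trans_eq ?_⟩
  rw [tsum_mul_right, tsum_geometric_of_lt_one hσ0.le hσ1]
  ring

theorem gevreyClass_of_norm_iteratedDerivWithin_le {k C A : ℝ} {f : ℝ → ℂ}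
    (hf : ContDiffOn ℝ ∞ f (Icc (-1) 1)) (hC : 0 ≤ C) (hA : 0 ≤ A)
    (h : ∀ n : ℕ, ∀ x ∈ Icc (-1 : ℝ) 1,
      ‖iteratedDerivWithin n f (Icc (-1) 1) x‖ ≤ C * A ^ n * (n ! * (n : ℝ) ^ ((n : ℝ) / k))) :
    GevreyClass k f := by
  refine ⟨hf, C + 1, by positivity, A + 1, by positivity, fun n x hx => (h n x hx).trans ?_⟩
  have hfact : (n ! : ℝ) * (n : ℝ) ^ ((n : ℝ) / k) ≤ (n : ℝ) ^ ((n : ℝ) * (1 + 1 / k)) := by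
    rcases n.eq_zero_or_pos with rfl | hn
    · simp
    calc (n ! : ℝ) * (n : ℝ) ^ ((n : ℝ) / k) ≤ (n : ℝ) ^ (n : ℝ) * (n : ℝ) ^ ((n : ℝ) / k) := by
          rw [Real.rpow_natCast]; gcongr; exact_mod_cast Nat.factorial_le_pow n
      _ = (n : ℝ) ^ ((n : ℝ) * (1 + 1 / k)) := by
          rw [← Real.rpow_add (by exact_mod_cast hn)]; ring_nf
  gcongr <;> linarith

theorem gevreyClass_tsum {k C A ρ : ℝ} (hk : 0 < k) (hC : 0 ≤ C) (hA : 0 ≤ A)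
    (hρ0 : 0 < ρ) (hρ1 : ρ < 1) (m : ℕ) {g : ℕ → ℝ → ℂ}
    (hg : ∀ j, ContDiffOn ℝ ∞ (g j) (Icc (-1) 1))
    (hgw : ∀ (n j : ℕ), ∀ x ∈ Icc (-1 : ℝ) 1, ‖iteratedDerivWithin n (g j) (Icc (-1) 1) x‖ ≤
      n ! * C * A ^ n * (ρ ^ j * ((m + j : ℕ) : ℝ) ^ ((n : ℝ) / k))) :
    GevreyClass k (fun x => ∑' j, g j x) := by
  obtain ⟨c, hc, a, ha, hsum⟩ := tsum_geometric_mul_rpow_le hρ0 hρ1 m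
  set B := (k * a)⁻¹ ^ (1 / k)
  have hB (n : ℕ) : ((n : ℝ) / k / a) ^ ((n : ℝ) / k) = B ^ n * (n : ℝ) ^ ((n : ℝ) / k) := by
    rw [← Real.rpow_natCast, ← Real.rpow_mul (by positivity), div_div,
      div_eq_mul_inv (n : ℝ), Real.mul_rpow (by positivity) (by positivity)]
    ring_nf
  have hw (n : ℕ) := (hsum ((n : ℝ) / k) (by positivity)).1.hasSum.mul_left (n ! * C * A ^ n)
  have hs : UniqueDiffOn ℝ (Icc (-1 : ℝ) 1) := uniqueDiffOn_Icc (by norm_num)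
  have hF := hasDerivWithinAt_tsum_iteratedDerivWithin (convex_Icc _ _) hs hg
    (fun n => (hw n).summable) hgw
  have hF0 : (fun x => ∑' j, iteratedDerivWithin 0 (g j) (Icc (-1) 1) x) =
      fun x => ∑' j, g j x := by simp
  rw [← hF0]
  refine gevreyClass_of_norm_iteratedDerivWithin_le (C := C * c) (A := A * B)
    (contDiffOn_of_hasDerivWithinAt_succ hs hF) (by positivity) (by positivity) fun n x hx => ?_
  rw [iteratedDerivWithin_eqOn_of_hasDerivWithinAt_succ hs hF n hx]
  calc ‖∑' j, iteratedDerivWithin n (g j) (Icc (-1) 1) x‖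
      ≤ n ! * C * A ^ n * ∑' j : ℕ, ρ ^ j * ((m + j : ℕ) : ℝ) ^ ((n : ℝ) / k) :=
        tsum_of_norm_bounded (hw n) fun j => hgw n j x hx
    _ ≤ n ! * C * A ^ n * (c * ((n : ℝ) / k / a) ^ ((n : ℝ) / k)) := by
        gcongr; exact (hsum _ (by positivity)).2
    _ = C * c * (A * B) ^ n * (n ! * (n : ℝ) ^ ((n : ℝ) / k)) := by
        rw [hB]; ring

section Restriction

variable {f : ℂ → ℂ} {U : Set ℂ}

theorem iteratedDeriv_comp_ofReal (hU : IsOpen U) (hf : DifferentiableOn ℂ f U) (n : ℕ) {x : ℝ}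
    (hx : (x : ℂ) ∈ U) : iteratedDeriv n (fun t : ℝ => f t) x = iteratedDeriv n f x := by
  induction n generalizing f with
  | zero => simp
  | succ n ih =>
    have hf' := hf.analyticOnNhd hU
    have hderiv : (fun t : ℝ => deriv (fun t : ℝ => f t) t) =ᶠ[𝓝 x] fun t : ℝ => deriv f t := by
      filter_upwards [(hU.preimage Complex.continuous_ofReal).mem_nhds hx] with t ht
      exact ((hf' t ht).differentiableAt.hasDerivAt.comp_ofReal).deriv
    rw [iteratedDeriv_succ', iteratedDeriv_succ', hderiv.iteratedDeriv_eq n]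
    exact ih hf'.deriv.differentiableOn

theorem contDiffOn_comp_ofReal (hU : IsOpen U) (hf : DifferentiableOn ℂ f U) :
    ContDiffOn ℝ ∞ (fun t : ℝ => f t) ((↑) ⁻¹' U) :=
  ((hf.contDiffOn hU).restrict_scalars ℝ).comp Complex.ofRealCLM.contDiff.contDiffOn
    fun _ ht => ht

theorem iteratedDerivWithin_comp_ofReal {s : Set ℝ} (hs : UniqueDiffOn ℝ s) (hU : IsOpen U)
    (hf : DifferentiableOn ℂ f U) (n : ℕ) {x : ℝ} (hxs : x ∈ s) (hxU : (x : ℂ) ∈ U) :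
    iteratedDerivWithin n (fun t : ℝ => f t) s x = iteratedDeriv n f x := by
  have hsmooth : ContDiffAt ℝ n (fun t : ℝ => f t) x :=
    ((contDiffOn_comp_ofReal hU hf).contDiffAt
      ((hU.preimage Complex.continuous_ofReal).mem_nhds hxU)).of_le (by exact_mod_cast le_top)
  rw [iteratedDerivWithin_eq_iteratedDeriv hs hsmooth hxs, iteratedDeriv_comp_ofReal hU hf n hxU]

end Restriction

section Tube

variable {k A : ℝ} {n : ℕ}

theorem ofReal_mem_seg {x : ℝ} (hx : x ∈ Icc (-1 : ℝ) 1) : (x : ℂ) ∈ seg := ⟨x, hx, rfl⟩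

theorem isOpen_tube (k A : ℝ) (n : ℕ) : IsOpen (tube k A n) :=
  isOpen_lt (continuous_infDist_pt seg) continuous_const

theorem seg_subset_tube (hA : 0 < A) (hn : 1 ≤ n) : seg ⊆ tube k A n := fun z hz => by
  have : 0 < A * (n : ℝ) ^ (-(1 : ℝ) / k) := by
    have : (0 : ℝ) < n := by exact_mod_cast hn
    positivity
  simpa [tube, infDist_zero_of_mem hz] using this

theorem Icc_subset_preimage_tube (hA : 0 < A) (hn : 1 ≤ n) :
    Icc (-1 : ℝ) 1 ⊆ (↑) ⁻¹' tube k A n := fun _ hx => seg_subset_tube hA hn (ofReal_mem_seg hx)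

theorem tube_subset_nbd (hk : 0 < k) (hA : 0 < A) (hn : 1 ≤ n) : tube k A n ⊆ nbd A := by
  intro z hz
  have : (n : ℝ) ^ (-(1 : ℝ) / k) ≤ 1 :=
    Real.rpow_le_one_of_one_le_of_nonpos (by exact_mod_cast hn)
      (div_nonpos_of_nonpos_of_nonneg (by norm_num) hk.le)
  exact hz.trans_le (mul_le_of_le_one_right hA.le this)

theorem closedBall_subset_tube {z : ℂ} (hz : z ∈ seg) {δ : ℝ}
    (hδ : δ < A * (n : ℝ) ^ (-(1 : ℝ) / k)) : closedBall z δ ⊆ tube k A n := fun _ hw =>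
  ((infDist_le_dist_of_mem hz).trans (mem_closedBall.1 hw)).trans_lt hδ

theorem norm_iteratedDerivWithin_le_of_tube {f : ℂ → ℂ} {M : ℝ} (hA : 0 < A) (hn : 1 ≤ n)
    (hf : DifferentiableOn ℂ f (tube k A n)) (hM : ∀ z ∈ tube k A n, ‖f z‖ ≤ M) (p : ℕ)
    {x : ℝ} (hx : x ∈ Icc (-1 : ℝ) 1) :
    ‖iteratedDerivWithin p (fun t : ℝ => f t) (Icc (-1) 1) x‖ ≤
      p ! * M * (2 / A) ^ p * (n : ℝ) ^ ((p : ℝ) / k) := by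
  have hn0 : (0 : ℝ) < n := by exact_mod_cast hn
  set δ := A / 2 * (n : ℝ) ^ (-(1 : ℝ) / k)
  have hδ : 0 < δ := by positivity
  have hball : closedBall (x : ℂ) δ ⊆ tube k A n :=
    closedBall_subset_tube (ofReal_mem_seg hx) (by
      have : 0 < (n : ℝ) ^ (-(1 : ℝ) / k) := by positivity
      simp only [δ]; nlinarith)
  have hδp : (δ ^ p)⁻¹ = (2 / A) ^ p * (n : ℝ) ^ ((p : ℝ) / k) := by
    rw [mul_pow, ← Real.rpow_natCast ((n : ℝ) ^ _), ← Real.rpow_mul hn0.le, mul_inv,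
      ← Real.rpow_neg hn0.le, ← inv_pow, inv_div]
    ring_nf
  rw [iteratedDerivWithin_comp_ofReal (uniqueDiffOn_Icc (by norm_num)) (isOpen_tube k A n) hf p hx
    (hball (mem_closedBall_self hδ.le))]
  calc ‖iteratedDeriv p f x‖ ≤ p ! * M / δ ^ p :=
        Complex.norm_iteratedDeriv_le_of_forall_mem_sphere_norm_le p hδ
          (hf.diffContOnCl_ball hball) fun z hz => hM z (hball (sphere_subset_closedBall hz))
    _ = p ! * M * (2 / A) ^ p * (n : ℝ) ^ ((p : ℝ) / k) := by
        rw [div_eq_mul_inv, hδp]; ring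

end Tube

theorem norm_le_supOn {f : ℂ → ℂ} {S : Set ℂ} (hf : BddAbove ((fun z => ‖f z‖) '' S)) {z : ℂ}
    (hz : z ∈ S) : ‖f z‖ ≤ supOn f S :=
  le_csSup hf ⟨z, hz, rfl⟩

theorem supOn_le {f : ℂ → ℂ} {S : Set ℂ} {C : ℝ} (hC : 0 ≤ C) (hf : ∀ z ∈ S, ‖f z‖ ≤ C) :
    supOn f S ≤ C :=
  Real.sSup_le (by rintro _ ⟨z, hz, rfl⟩; exact hf z hz) hC

theorem APropAt.differentiableOn_iterate_and_norm_iterate_le {k ρ A : ℝ} {N m : ℕ}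
    {T : (ℂ → ℂ) → ℂ → ℂ} (hT : APropAt k T ρ A N) (hρ : 0 ≤ ρ) (hm : N ≤ m) {f : ℂ → ℂ}
    {M : ℝ} (hM : 0 ≤ M) (hf : DifferentiableOn ℂ f (tube k A m))
    (hfM : ∀ z ∈ tube k A m, ‖f z‖ ≤ M) (j : ℕ) :
    DifferentiableOn ℂ (T^[j] f) (tube k A (m + j)) ∧
      ∀ z ∈ tube k A (m + j), ‖T^[j] f z‖ ≤ M * ρ ^ j := by
  induction j with
  | zero => exact ⟨hf, by simpa using hfM⟩
  | succ j ih =>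
    obtain ⟨hdiff, hle⟩ := ih
    have hstep := hT (m + j) (hm.trans (Nat.le_add_right m j)) _ hdiff
      ⟨M * ρ ^ j, by rintro _ ⟨z, hz, rfl⟩; exact hle z hz⟩
    rw [Function.iterate_succ_apply']
    refine ⟨hstep.1, fun z hz => (hstep.2 z hz).trans ?_⟩
    exact (mul_le_mul_of_nonneg_left (supOn_le (by positivity) hle) hρ).trans_eq (by ring)

theorem main_solvability_general (k τ ρ r : ℝ) (hk : 0 < k)
    (T : (ℂ → ℂ) → ℂ → ℂ) (hTA : AProp k T τ ρ)
    (hr : 0 < r) (hrτ : r ≤ τ) (u : ℂ → ℂ)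
    (hu : DifferentiableOn ℂ u (nbd r))
    (hub : BddAbove ((fun z => ‖u z‖) '' nbd r)) :
    ∃ v : ℝ → ℂ,
      TendstoUniformlyOn (fun N (x : ℝ) => ∑ n ∈ Finset.range N, (T^[n] u) (x : ℂ))
        v Filter.atTop (Set.Icc (-1) 1) ∧
      GevreyClass k v ∧
      ∀ x ∈ Set.Icc (-1 : ℝ) 1, v x = u (x : ℂ) + ∑' n : ℕ, (T^[n + 1] u) (x : ℂ) := by
  obtain ⟨-, ⟨hρ0, hρ1⟩, hTA, -⟩ := hTA
  obtain ⟨N, hN⟩ := hTA r hr hrτ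
  set m := max N 1
  have hm (j : ℕ) : 1 ≤ m + j := (le_max_right N 1).trans (Nat.le_add_right m j)
  set S := supOn u (tube k r m)
  have hum : ∀ z ∈ tube k r m, ‖u z‖ ≤ S := fun _ hz =>
    norm_le_supOn (hub.mono (image_mono (tube_subset_nbd hk hr (hm 0)))) hz
  have hS : 0 ≤ S := (norm_nonneg _).trans
    (hum _ (Icc_subset_preimage_tube hr (hm 0) (by norm_num : (0 : ℝ) ∈ Icc (-1 : ℝ) 1)))
  have hiter := hN.differentiableOn_iterate_and_norm_iterate_le hρ0.le (le_max_left N 1) hS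
    (hu.mono (tube_subset_nbd hk hr (hm 0))) hum
  have hbound (j : ℕ) : ∀ x ∈ Icc (-1 : ℝ) 1, ‖T^[j] u x‖ ≤ S * ρ ^ j := fun _ hx =>
    (hiter j).2 _ (Icc_subset_preimage_tube hr (hm j) hx)
  have hsum := (summable_geometric_of_lt_one hρ0.le hρ1).mul_left S
  refine ⟨fun x => ∑' j, T^[j] u x, tendstoUniformlyOn_tsum_nat hsum hbound,
    gevreyClass_tsum (A := 2 / r) hk hS (by positivity) hρ0 hρ1 m
      (fun j => (contDiffOn_comp_ofReal (isOpen_tube _ _ _) (hiter j).1).mono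
        (Icc_subset_preimage_tube hr (hm j)))
      (fun n j x hx => (norm_iteratedDerivWithin_le_of_tube hr (hm j) (hiter j).1 (hiter j).2 n
        hx).trans_eq (by ring)),
    fun x hx => (Summable.of_norm_bounded hsum fun j => hbound j x hx).tsum_eq_zero_add⟩

/-- main result: if `T` has the `A(k)` property with `k`-threshold
`τ` and `u` is holomorphic and bounded on `[-1,1]_r` with `0 < r ≤ τ`, then the
series `Σ_{n≥0} (T^{<n>} u)|_{[-1,1]}` converges uniformly on `[-1,1]`, its sum
`v` belongs to `G_k([-1,1])` and solves `v - T̃(v) = u`, i.e.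
`v(x) = u(x) + Σ_{n≥1} (T^{<n>} u)(x)` on `[-1,1]`. -/
theorem main_solvability (k τ ρ r : ℝ) (hk : 0 < k)
    (T : (ℂ → ℂ) → ℂ → ℂ) (hTlin : IsLinOp T) (hTA : AProp k T τ ρ)
    (hr : 0 < r) (hrτ : r ≤ τ) (u : ℂ → ℂ)
    (hu : DifferentiableOn ℂ u (nbd r))
    (hub : BddAbove ((fun z => ‖u z‖) '' nbd r)) :
    ∃ v : ℝ → ℂ,
      TendstoUniformlyOn (fun N (x : ℝ) => ∑ n ∈ Finset.range N, (T^[n] u) (x : ℂ))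
        v Filter.atTop (Set.Icc (-1) 1) ∧
      GevreyClass k v ∧
      ∀ x ∈ Set.Icc (-1 : ℝ) 1, v x = u (x : ℂ) + ∑' n : ℕ, (T^[n + 1] u) (x : ℂ) :=
  main_solvability_general k τ ρ r hk T hTA hr hrτ u hu hub
end
end

section
/- Let g be an entire function with g([-1,1]) ⊆ [-1,1] and λ(g) ≤ 1, and for n ≥ 1 define g_n(z) := g^{<n>}(z/2^{n-1}). Then the sequence (g_n)_{n≥1} verifies the E(1) property: there exists τ > 0 such that for every A ∈ (0,τ] there is an integer M(A) with g_n([-1,1]_{1,A,p+1}) ⊆ [-1,1]_{1,A,p} for all p ≥ M(A) and all n ≥ 1. -/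
open Metric Set Filter

noncomputable section

/-!
If all Taylor coefficients of `g` at a point `w ∈ [-1,1]` have modulus at most `1`, then
`|g z - g w| ≤ r + r² + ⋯ = r / (1 - r)` for `r = |z - w| < 1`, and since `g w ∈ [-1,1]`, the
distance `d` to the segment obeys `d(g z) ≤ d(z) / (1 - d(z))`. The Möbius map `t ↦ t / (1 - t)`
has `n`-th iterate `t ↦ t / (1 - n t)`, so `d(g^[n] z) ≤ d(z) / (1 - n d(z))`. The rescaling by
`2^(n-1)` divides the distance by `2^(n-1) ≥ n / 2`, whence `d(g_n z) ≤ d / (1 - 2d)`, and this is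
`< A / p` as soon as `d < A / (p + 1)` and `A ≤ 1 / 2`.
-/

lemma norm_sub_le_div_one_sub_of_iteratedDeriv_le_factorial {g : ℂ → ℂ} (hg : Differentiable ℂ g)
    {w : ℂ} (hbound : ∀ n : ℕ, 1 ≤ n → ‖iteratedDeriv n g w‖ ≤ (n.factorial : ℝ))
    {z : ℂ} (hz : ‖z - w‖ < 1) :
    ‖g z - g w‖ ≤ ‖z - w‖ / (1 - ‖z - w‖) := by
  set r := ‖z - w‖
  set term : ℕ → ℂ := fun n => (n.factorial : ℂ)⁻¹ • (z - w) ^ n • iteratedDeriv n g w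
  have hsum : HasSum (fun n => term (n + 1)) (g z - g w) := by
    have := (hasSum_nat_add_iff' 1).mpr (Complex.hasSum_taylorSeries_of_entire hg w z)
    simpa [term] using this
  have hterm : ∀ n, ‖term (n + 1)‖ ≤ r * r ^ n := fun n => by
    have hfac : (0 : ℝ) < (n + 1).factorial := by positivity
    calc ‖term (n + 1)‖ = r ^ (n + 1) * ‖iteratedDeriv (n + 1) g w‖ / (n + 1).factorial := by
          simp only [term, norm_smul, norm_inv, norm_pow, Complex.norm_natCast]
          ring
      _ ≤ r ^ (n + 1) * (n + 1).factorial / (n + 1).factorial := by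
          gcongr; exact hbound (n + 1) n.succ_pos
      _ = r * r ^ n := by rw [mul_div_cancel_right₀ _ hfac.ne', pow_succ']
  have hgeom : HasSum (fun n => r * r ^ n) (r / (1 - r)) :=
    (hasSum_geometric_of_lt_one (norm_nonneg _) hz).mul_left r
  simpa [hsum.tsum_eq] using tsum_of_norm_bounded hgeom hterm

section IterateDistance

variable {K : Set ℂ} {g : ℂ → ℂ}

lemma infDist_apply_le_div_one_sub (hK : IsCompact K) (hKne : K.Nonempty)
    (hg : Differentiable ℂ g) (hgK : MapsTo g K K)
    (hbound : ∀ n : ℕ, 1 ≤ n → ∀ w ∈ K, ‖iteratedDeriv n g w‖ ≤ (n.factorial : ℝ))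
    {z : ℂ} (hz : infDist z K < 1) :
    infDist (g z) K ≤ infDist z K / (1 - infDist z K) := by
  obtain ⟨w, hwK, hdist⟩ := hK.exists_infDist_eq_dist hKne z
  rw [hdist, dist_eq_norm] at hz ⊢
  calc infDist (g z) K ≤ dist (g z) (g w) := infDist_le_dist_of_mem (hgK hwK)
    _ ≤ ‖z - w‖ / (1 - ‖z - w‖) := by
      rw [dist_eq_norm]
      exact norm_sub_le_div_one_sub_of_iteratedDeriv_le_factorial hg
        (fun n hn => hbound n hn w hwK) hz

lemma div_one_sub_div_one_sub_nat_mul {δ : ℝ} {n : ℕ} (h : (n + 1 : ℝ) * δ < 1)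
    (hδ : 0 ≤ δ) :
    δ / (1 - n * δ) / (1 - δ / (1 - n * δ)) = δ / (1 - (n + 1 : ℝ) * δ) := by
  have hn : 0 < 1 - n * δ := by nlinarith
  have hsub : 1 - δ / (1 - n * δ) = (1 - (n + 1 : ℝ) * δ) / (1 - n * δ) := by
    rw [eq_div_iff hn.ne', sub_mul, div_mul_cancel₀ _ hn.ne']
    ring
  rw [hsub, div_div_div_cancel_right₀ hn.ne']

lemma infDist_iterate_le_div_one_sub_nat_mul (hK : IsCompact K) (hKne : K.Nonempty)
    (hg : Differentiable ℂ g) (hgK : MapsTo g K K)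
    (hbound : ∀ n : ℕ, 1 ≤ n → ∀ w ∈ K, ‖iteratedDeriv n g w‖ ≤ (n.factorial : ℝ))
    {z : ℂ} {δ : ℝ} (hzδ : infDist z K ≤ δ) (n : ℕ) (hnδ : n * δ < 1) :
    infDist (g^[n] z) K ≤ δ / (1 - n * δ) := by
  have hδ : 0 ≤ δ := infDist_nonneg.trans hzδ
  induction n with
  | zero => simpa using hzδ
  | succ n ih =>
    push_cast at hnδ ⊢
    have hprev : infDist (g^[n] z) K ≤ δ / (1 - n * δ) := ih (by nlinarith)
    have hlt : δ / (1 - n * δ) < 1 := by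
      rw [div_lt_one (by nlinarith)]
      linarith
    rw [Function.iterate_succ_apply', ← div_one_sub_div_one_sub_nat_mul hnδ hδ]
    calc infDist (g (g^[n] z)) K
        ≤ infDist (g^[n] z) K / (1 - infDist (g^[n] z) K) :=
          infDist_apply_le_div_one_sub hK hKne hg hgK hbound (hprev.trans_lt hlt)
      _ ≤ δ / (1 - n * δ) / (1 - δ / (1 - n * δ)) :=
          div_le_div₀ (infDist_nonneg.trans hprev) hprev (by linarith) (by linarith)

end IterateDistance

open scoped Pointwise

lemma infDist_smul_le_of_smul_subset {𝕜 E : Type*} [NormedField 𝕜] [SeminormedAddCommGroup E]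
    [NormedSpace 𝕜 E] {K : Set E} (hKne : K.Nonempty) {c : 𝕜} (hc : c ≠ 0) (hcK : c • K ⊆ K)
    (z : E) :
    infDist (c • z) K ≤ ‖c‖ * infDist z K := by
  rw [← infDist_smul₀ hc]
  exact infDist_le_infDist_of_subset hcK (hKne.smul_set)

lemma isCompact_seg : IsCompact seg :=
  isCompact_Icc.image Complex.continuous_ofReal

lemma seg_nonempty : seg.Nonempty :=
  ⟨1, 1, ⟨by norm_num, le_rfl⟩, Complex.ofReal_one⟩

lemma ofReal_smul_seg_subset {t : ℝ} (ht : |t| ≤ 1) : (t : ℂ) • seg ⊆ seg := by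
  rintro _ ⟨_, ⟨x, hx, rfl⟩, rfl⟩
  refine ⟨t * x, abs_le.mp ?_, by simp⟩
  rw [abs_mul]
  exact mul_le_one₀ ht (abs_nonneg x) (abs_le.mpr hx)

lemma infDist_div_two_pow_le (z : ℂ) (m : ℕ) :
    infDist (z / 2 ^ m) seg ≤ infDist z seg / 2 ^ m := by
  have hc : |((2 : ℝ) ^ m)⁻¹| ≤ 1 := by
    rw [abs_of_pos (by positivity)]
    exact inv_le_one_of_one_le₀ (one_le_pow₀ one_le_two)
  have := infDist_smul_le_of_smul_subset seg_nonempty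
    (Complex.ofReal_ne_zero.mpr (by positivity)) (ofReal_smul_seg_subset hc) z
  simpa [div_eq_inv_mul, Complex.norm_real] using this

lemma nat_le_two_mul_two_pow_pred (n : ℕ) : (n : ℝ) ≤ 2 * 2 ^ (n - 1) := by
  rcases n with _ | n
  · norm_num
  · rw [Nat.add_sub_cancel, ← pow_succ']
    exact_mod_cast (Nat.lt_two_pow_self).le

lemma infDist_iterate_div_two_pow_le {g : ℂ → ℂ} (hg : Differentiable ℂ g)
    (hgseg : MapsTo g seg seg)
    (hbound : ∀ n : ℕ, 1 ≤ n → ∀ w ∈ seg, ‖iteratedDeriv n g w‖ ≤ (n.factorial : ℝ))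
    (n : ℕ) {z : ℂ} (hz : 2 * infDist z seg < 1) :
    infDist (g^[n] (z / 2 ^ (n - 1))) seg ≤ infDist z seg / (1 - 2 * infDist z seg) := by
  set d := infDist z seg
  set δ := d / 2 ^ (n - 1)
  have hd : 0 ≤ d := infDist_nonneg
  have hδd : δ ≤ d := div_le_self hd (one_le_pow₀ one_le_two)
  have hnδ : n * δ ≤ 2 * d := by
    calc n * δ ≤ 2 * 2 ^ (n - 1) * δ := by gcongr; exact nat_le_two_mul_two_pow_pred n
      _ = 2 * d := by simp only [δ]; field_simp
  calc infDist (g^[n] (z / 2 ^ (n - 1))) seg ≤ δ / (1 - n * δ) :=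
        infDist_iterate_le_div_one_sub_nat_mul isCompact_seg seg_nonempty hg hgseg hbound
          (infDist_div_two_pow_le z (n - 1)) n (by linarith)
    _ ≤ d / (1 - 2 * d) := div_le_div₀ hd hδd (by linarith) (by linarith)

lemma mem_tube_one_iff {A : ℝ} {p : ℕ} {z : ℂ} : z ∈ tube 1 A p ↔ infDist z seg < A / p := by
  simp [tube, Real.rpow_neg_one, div_eq_mul_inv]

/-- for `g` entire with `g([-1,1]) ⊆ [-1,1]` and `λ(g) ≤ 1`, the
sequence `g_n(z) = g^{<n>}(z / 2^{n-1})` verifies the `E(1)` property. -/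
theorem iterates_E1 (g : ℂ → ℂ) (hg : Differentiable ℂ g)
    (hgseg : ∀ z ∈ seg, g z ∈ seg)
    (hglam : ∀ n : ℕ, 1 ≤ n → ∀ z ∈ seg, ‖iteratedDeriv n g z‖ ≤ (n.factorial : ℝ)) :
    ∃ τ : ℝ, 0 < τ ∧ ∀ A : ℝ, 0 < A → A ≤ τ → ∃ M : ℕ, ∀ p : ℕ, M ≤ p →
      ∀ n : ℕ, 1 ≤ n → ∀ z ∈ tube 1 A (p + 1),
        g^[n] (z / 2 ^ (n - 1)) ∈ tube 1 A p := by
  refine ⟨1 / 2, by norm_num, fun A hA hA2 => ⟨1, fun p hp n _ z hz => ?_⟩⟩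
  rw [mem_tube_one_iff] at hz ⊢
  push_cast at hz
  have hp : (1 : ℝ) ≤ p := by exact_mod_cast hp
  set d := infDist z seg
  have hd : 0 ≤ d := infDist_nonneg
  have hdp : d * (p + 1) < A := (lt_div_iff₀ (by positivity)).mp hz
  have h2d : 2 * d < 1 := by nlinarith
  calc infDist (g^[n] (z / 2 ^ (n - 1))) seg ≤ d / (1 - 2 * d) :=
        infDist_iterate_div_two_pow_le hg hgseg hglam n h2d
    _ < A / p := by
      rw [div_lt_div_iff₀ (by linarith) (by linarith)]
      nlinarith
end
end
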